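/- (Corollary 2.2) There exists h₀ > 0, depending only on Ω⁺ and B, such that for every admissible h < h₀ the following holds: if u is a real-valued function on Ω_h⁺ with D_ν u = 0 on every interval of I_h⁺ (1 ≤ ν ≤ d), then u is constant on Ω_h⁺; and similarly, if u is a function on Ω_h⁻ with D_ν u = 0 on every interval of I_h⁻, then u is constant on Ω_h⁻. -/

import Mathlib

open scoped BigOperators

namespace DiscretePotential

/-- Points of `ℝ^d`, regarded as functions `Fin d → ℝ`. -/
abbrev Pt (d : ℕ) := Fin d → ℝ

/-- A grid interval is encoded by its lower endpoint `x` and its direction `ν`;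
it represents the segment `[x, x + h e_ν]`. -/
abbrev Iv (d : ℕ) := Pt d × Fin d

/-- The closed cube with corner `a` and side length `L`. -/
def cube {d : ℕ} (a : Pt d) (L : ℝ) : Set (Pt d) := Set.Icc a fun i => a i + L

/-- `Γ` is a `C²` hypersurface: near each of its points it is the zero set of a
`C²` function with nonvanishing derivative. -/
def IsC2Hypersurface {d : ℕ} (Γ : Set (Pt d)) : Prop :=
  ∀ x ∈ Γ, ∃ (U : Set (Pt d)) (F : Pt d → ℝ), IsOpen U ∧ x ∈ U ∧ ContDiff ℝ 2 F ∧
    (∀ y ∈ U, (y ∈ Γ ↔ F y = 0)) ∧ ∀ y ∈ U, fderiv ℝ F y ≠ 0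

/-- The geometric setup: `d ∈ {2,3}`, a closed cube `B` (with corner `a` and side `L`),
and a bounded open connected set `Ω⁺` with `C²` boundary whose closure lies in the
interior of `B`, such that `Ω⁻ = int B \ closure Ω⁺` is connected. -/
structure Setup (d : ℕ) : Type where
  dim : d = 2 ∨ d = 3
  a : Pt d
  L : ℝ
  Lpos : 0 < L
  Ωp : Set (Pt d)
  isOpen_Ωp : IsOpen Ωp
  bounded_Ωp : Bornology.IsBounded Ωp
  connected_Ωp : IsConnected Ωp
  closure_subset : closure Ωp ⊆ interior (cube a L)
  c2_boundary : IsC2Hypersurface (frontier Ωp)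
  connected_Ωm : IsConnected (interior (cube a L) \ closure Ωp)

/-- `x` is a point of the lattice `hℤ^d`. -/
def IsLattice {d : ℕ} (h : ℝ) (x : Pt d) : Prop := ∀ i, ∃ m : ℤ, x i = m * h

/-- `x + h e_ν`. -/
def step {d : ℕ} (h : ℝ) (x : Pt d) (ν : Fin d) : Pt d := fun i => x i + if i = ν then h else 0

/-- `x - h e_ν`. -/
def stepm {d : ℕ} (h : ℝ) (x : Pt d) (ν : Fin d) : Pt d := fun i => x i - if i = ν then h else 0

namespace Setup

variable {d : ℕ} (S : Setup d)

/-- The cube `B`. -/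
def B : Set (Pt d) := cube S.a S.L

/-- `Ω⁻ = int B \ closure Ω⁺`. -/
def Ωm : Set (Pt d) := interior S.B \ closure S.Ωp

/-- `h` is admissible: `h > 0` and `B` is a union of cells of the lattice `hℤ^d`. -/
def Admissible (h : ℝ) : Prop :=
  0 < h ∧ (∀ i, ∃ m : ℤ, S.a i = m * h) ∧ ∃ n : ℕ, S.L = n * h

/-- Grid points lying in `Ω⁺`. -/
def Ωhp (h : ℝ) : Set (Pt d) := {x | IsLattice h x ∧ x ∈ S.Ωp}

/-- Grid points lying in `Ω⁻`. -/
def Ωhm (h : ℝ) : Set (Pt d) := {x | IsLattice h x ∧ x ∈ S.Ωm}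

/-- Grid points on `∂B`. -/
def bdB (h : ℝ) : Set (Pt d) := {x | IsLattice h x ∧ x ∈ frontier S.B}

/-- `I` is a grid interval: it joins adjacent grid points of `B`. -/
def IsGridIv (h : ℝ) (I : Iv d) : Prop :=
  IsLattice h I.1 ∧ I.1 ∈ S.B ∧ step h I.1 I.2 ∈ S.B

/-- `I_h⁺`: grid intervals with both endpoints in `Ω_h⁺`. -/
def Ip (h : ℝ) : Set (Iv d) := {I | S.IsGridIv h I ∧ I.1 ∈ S.Ωp ∧ step h I.1 I.2 ∈ S.Ωp}

/-- `I_h⁻`: grid intervals of `B` with both endpoints outside `Ω⁺`. -/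
def Im (h : ℝ) : Set (Iv d) := {I | S.IsGridIv h I ∧ I.1 ∉ S.Ωp ∧ step h I.1 I.2 ∉ S.Ωp}

/-- `I_h^cut`: grid intervals with one endpoint in `Ω_h⁺` and one in `Ω_h⁻`. -/
def Icut (h : ℝ) : Set (Iv d) :=
  {I | S.IsGridIv h I ∧
    ((I.1 ∈ S.Ωp ∧ step h I.1 I.2 ∈ S.Ωm) ∨ (I.1 ∈ S.Ωm ∧ step h I.1 I.2 ∈ S.Ωp))}

/-- A choice of `Γ_h¹`: for each cut interval `I = [x, x + h e_ν]`, the assigned point is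
`x* = x + (s I) h e_ν`, at distance at least `δh` from both endpoints, i.e. `δ ≤ s I ≤ 1 - δ`. -/
def IsGammaChoice (h δ : ℝ) (s : Iv d → ℝ) : Prop :=
  ∀ I ∈ S.Icut h, δ ≤ s I ∧ s I ≤ 1 - δ

open Classical in
/-- The indicator function `χ` of `Ω⁺`. -/
noncomputable def chi (x : Pt d) : ℝ := if x ∈ S.Ωp then 1 else 0

/-- `ξ^ν(I) = s χ(x) + (1-s) χ(x + h e_ν)` (this is `1` on `I_h⁺` and `0` on `I_h⁻`). -/
noncomputable def xi (h : ℝ) (s : Iv d → ℝ) (I : Iv d) : ℝ :=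
  s I * S.chi I.1 + (1 - s I) * S.chi (step h I.1 I.2)

/-- `D_ν χ` on the interval `I`. -/
noncomputable def Dchi (h : ℝ) (I : Iv d) : ℝ := (S.chi (step h I.1 I.2) - S.chi I.1) / h

open Classical in
/-- An element of `ℱ(Ω̄_h⁺)` is encoded by a function `f` (its values on `Ω_h⁺`) together
with `g : Iv d → ℝ` recording, for each cut interval, the extended value at its endpoint
in `Ω_h⁻`.  `valP f g I x` is the resulting value at the endpoint `x` of the interval `I`. -/
noncomputable def valP (f : Pt d → ℝ) (g : Iv d → ℝ) (I : Iv d) (x : Pt d) : ℝ :=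
  if x ∈ S.Ωp then f x else g I

open Classical in
/-- An element of `ℱ(Ω̄_h⁻)` is encoded by a function `f` (its values on `Ω_h⁻ ∪ ∂B_h`)
together with `g : Iv d → ℝ` recording, for each cut interval, the extended value at its
endpoint in `Ω_h⁺`.  `valM f g I x` is the resulting value at the endpoint `x` of `I`. -/
noncomputable def valM (f : Pt d → ℝ) (g : Iv d → ℝ) (I : Iv d) (x : Pt d) : ℝ :=
  if x ∈ S.Ωp then g I else f x

/-- Divided difference `D_ν u` on the interval `I`, for `u = (f,g) ∈ ℱ(Ω̄_h⁺)`. -/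
noncomputable def DP (h : ℝ) (f : Pt d → ℝ) (g : Iv d → ℝ) (I : Iv d) : ℝ :=
  (S.valP f g I (step h I.1 I.2) - S.valP f g I I.1) / h

/-- Divided difference `D_ν u` on the interval `I`, for `u = (f,g) ∈ ℱ(Ω̄_h⁻)`. -/
noncomputable def DM (h : ℝ) (f : Pt d → ℝ) (g : Iv d → ℝ) (I : Iv d) : ℝ :=
  (S.valM f g I (step h I.1 I.2) - S.valM f g I I.1) / h

/-- The discrete Laplacian `Δ_h u` at `x`, for `u = (f,g) ∈ ℱ(Ω̄_h⁺)` (extended values are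
used across cut intervals). -/
noncomputable def lapP (h : ℝ) (f : Pt d → ℝ) (g : Iv d → ℝ) (x : Pt d) : ℝ :=
  ∑ ν : Fin d, (S.valP f g (x, ν) (step h x ν) - 2 * f x
      + S.valP f g (stepm h x ν, ν) (stepm h x ν)) / h ^ 2

/-- The discrete Laplacian `Δ_h u` at `x`, for `u = (f,g) ∈ ℱ(Ω̄_h⁻)`. -/
noncomputable def lapM (h : ℝ) (f : Pt d → ℝ) (g : Iv d → ℝ) (x : Pt d) : ℝ :=
  ∑ ν : Fin d, (S.valM f g (x, ν) (step h x ν) - 2 * f x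
      + S.valM f g (stepm h x ν, ν) (stepm h x ν)) / h ^ 2

/-- The interpolated boundary value `(Mu)(x*)` at the assigned point of the cut interval `I`,
for `u = (f,g) ∈ ℱ(Ω̄_h⁺)`. -/
noncomputable def MP (h : ℝ) (s : Iv d → ℝ) (f : Pt d → ℝ) (g : Iv d → ℝ) (I : Iv d) : ℝ :=
  (1 - s I) * S.valP f g I I.1 + s I * S.valP f g I (step h I.1 I.2)

/-- The interpolated boundary value `(Mu)(x*)` at the assigned point of the cut interval `I`,
for `u = (f,g) ∈ ℱ(Ω̄_h⁻)`. -/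
noncomputable def MM (h : ℝ) (s : Iv d → ℝ) (f : Pt d → ℝ) (g : Iv d → ℝ) (I : Iv d) : ℝ :=
  (1 - s I) * S.valM f g I I.1 + s I * S.valM f g I (step h I.1 I.2)

/-- The inner product `⟨u,v⟩⁺ = Σ_{I ∈ I_h⁺ ∪ I_h^cut} (D_ν u)(D_ν v) ξ^ν h^d`. -/
noncomputable def ipP (h : ℝ) (s : Iv d → ℝ) (f : Pt d → ℝ) (g : Iv d → ℝ)
    (f' : Pt d → ℝ) (g' : Iv d → ℝ) : ℝ :=
  ∑ᶠ I ∈ S.Ip h ∪ S.Icut h, S.DP h f g I * S.DP h f' g' I * S.xi h s I * h ^ d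

/-- The inner product `⟨u,v⟩⁻ = Σ_{I ∈ I_h⁻ ∪ I_h^cut} (D_ν u)(D_ν v)(1 - ξ^ν) h^d`. -/
noncomputable def ipM (h : ℝ) (s : Iv d → ℝ) (f : Pt d → ℝ) (g : Iv d → ℝ)
    (f' : Pt d → ℝ) (g' : Iv d → ℝ) : ℝ :=
  ∑ᶠ I ∈ S.Im h ∪ S.Icut h, S.DM h f g I * S.DM h f' g' I * (1 - S.xi h s I) * h ^ d

/-- `u = (f,g) ∈ ℱ(Ω̄_h⁺)` is discrete harmonic on `Ω_h⁺`. -/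
def IsHarmP (h : ℝ) (f : Pt d → ℝ) (g : Iv d → ℝ) : Prop :=
  ∀ x ∈ S.Ωhp h, S.lapP h f g x = 0

/-- `u = (f,g) ∈ ℱ(Ω̄_h⁻)` is discrete harmonic on `Ω_h⁻`. -/
def IsHarmM (h : ℝ) (f : Pt d → ℝ) (g : Iv d → ℝ) : Prop :=
  ∀ x ∈ S.Ωhm h, S.lapM h f g x = 0

/-- `f` vanishes on `∂B_h` (required of elements of `ℱ(Ω̄_h⁻)`). -/
def VanishBd (h : ℝ) (f : Pt d → ℝ) : Prop := ∀ x ∈ S.bdB h, f x = 0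

/-- `(v⁺, v⁻) = Sψ` is the single layer with boundary values `ψ ∈ ℱ(Γ_h¹)`
(functions on `Γ_h¹` are encoded as functions on the cut intervals). -/
def IsSingleLayer (h : ℝ) (s ψ : Iv d → ℝ) (vp : Pt d → ℝ) (gp : Iv d → ℝ)
    (vm : Pt d → ℝ) (gm : Iv d → ℝ) : Prop :=
  S.IsHarmP h vp gp ∧ (∀ I ∈ S.Icut h, S.MP h s vp gp I = ψ I) ∧
  S.IsHarmM h vm gm ∧ (∀ I ∈ S.Icut h, S.MM h s vm gm I = ψ I) ∧ S.VanishBd h vm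

/-- `(u⁺, u⁻)` is the double layer with jump `φ ∈ ℱ(Γ_h¹)`. -/
def IsDoubleLayer (h : ℝ) (s φ : Iv d → ℝ) (up : Pt d → ℝ) (gp : Iv d → ℝ)
    (um : Pt d → ℝ) (gm : Iv d → ℝ) : Prop :=
  S.IsHarmP h up gp ∧ S.IsHarmM h um gm ∧ S.VanishBd h um ∧
  (∀ I ∈ S.Icut h, S.MP h s up gp I - S.MM h s um gm I = φ I) ∧
  (∀ I ∈ S.Icut h, S.DP h up gp I = S.DM h um gm I)

/-- `‖ψ‖² = ⟨v⁺,v⁺⟩⁺ + ⟨v⁻,v⁻⟩⁻` for the single layer `(v⁺,v⁻) = Sψ`. -/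
noncomputable def energy (h : ℝ) (s : Iv d → ℝ) (vp : Pt d → ℝ) (gp : Iv d → ℝ)
    (vm : Pt d → ℝ) (gm : Iv d → ℝ) : ℝ :=
  S.ipP h s vp gp vp gp + S.ipM h s vm gm vm gm

end Setup

end DiscretePotential

/-!
Both statements say that, for small admissible `h`, the grid graph whose vertices are the lattice
points of `Ω⁺` (resp. of `B \ Ω⁺`) and whose edges are the grid intervals inside that set connects
any two points of `Ω_h⁺` (resp. `Ω_h⁻`); a function with vanishing divided differences is then
constant along grid paths.

Away from `Γ` this comes from connectedness: a compact connected set `C` whose `2h`-neighbourhood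
lies in `Ω^±` carries `h`-chains between any two of its points, and rounding every point of such a
chain down to the lattice turns it into a grid path. Near `Γ` the `C²` boundary gives finitely many
local defining functions `F` with `∂_ν F ≥ c > 0`; walking along `±e_ν` increases `|F|` at a
uniform rate without crossing `Γ`, so every grid point near `Γ` reaches a fixed compact set at
positive distance from `Γ`. Grid points of `Ω⁻` near `∂B` are first moved into a shrunken cube
through a lattice box that stays far from `Ω⁺`.
-/

open Metric Set Relation Topology

lemma IsOpen.exists_isCompact_isPreconnected_between {E : Type*} [NormedAddCommGroup E]
    [NormedSpace ℝ E] [ProperSpace E] {U K : Set E} (hU : IsOpen U) (hUc : IsConnected U)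
    (hK : IsCompact K) (hKU : K ⊆ U) :
    ∃ C, IsCompact C ∧ IsPreconnected C ∧ K ⊆ C ∧ C ⊆ U := by
  obtain ⟨r, hr, hrU⟩ := hK.exists_cthickening_subset_open hU hKU
  obtain ⟨t, htK, htf, hKt⟩ := finite_cover_balls_of_compact hK hr
  obtain ⟨z₀, hz₀⟩ := hUc.nonempty
  have hpath : ∀ z ∈ U,
      ∃ P : Set E, IsCompact P ∧ IsPreconnected P ∧ z₀ ∈ P ∧ z ∈ P ∧ P ⊆ U := by
    intro z hz
    let γ := ((hU.isConnected_iff_isPathConnected.mp hUc).joinedIn z₀ hz₀ z hz).somePath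
    refine ⟨range γ, isCompact_range γ.continuous,
      (isConnected_range γ.continuous).isPreconnected, ⟨0, by simp⟩, ⟨1, by simp⟩, ?_⟩
    rintro _ ⟨s, rfl⟩
    exact JoinedIn.somePath_mem _ s
  choose! P hP using hpath
  have hpiece : ∀ z ∈ t, IsCompact (P z ∪ closedBall z r) ∧
      IsPreconnected (P z ∪ closedBall z r) ∧ z₀ ∈ P z ∪ closedBall z r ∧
      P z ∪ closedBall z r ⊆ U := by
    intro z hzt
    obtain ⟨hc, hp, h0, hz, hPU⟩ := hP z (hKU (htK hzt))
    exact ⟨hc.union (isCompact_closedBall z r),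
      hp.union z hz (mem_closedBall_self hr.le) (convex_closedBall z r).isPreconnected, Or.inl h0,
      union_subset hPU ((closedBall_subset_cthickening (htK hzt) r).trans hrU)⟩
  refine ⟨⋃ z ∈ t, (P z ∪ closedBall z r), htf.isCompact_biUnion fun z hz => (hpiece z hz).1,
    isPreconnected_of_forall z₀ fun y hy => ?_, fun y hy => ?_,
    iUnion₂_subset fun z hz => (hpiece z hz).2.2.2⟩
  · obtain ⟨z, hz, hyz⟩ := mem_iUnion₂.mp hy
    exact ⟨_, subset_biUnion_of_mem hz, (hpiece z hz).2.2.1, hyz, (hpiece z hz).2.1⟩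
  · obtain ⟨z, hz, hyz⟩ := mem_iUnion₂.mp (hKt hy)
    exact mem_iUnion₂.mpr ⟨z, hz, Or.inr (ball_subset_closedBall hyz)⟩

lemma Convex.add_mul_le_of_le_fderiv {E : Type*} [NormedAddCommGroup E] [NormedSpace ℝ E]
    {G : E → ℝ} (hG : Differentiable ℝ G) {s : Set E} (hs : Convex ℝ s) {e : E} {c : ℝ}
    (hc : ∀ y ∈ s, c ≤ fderiv ℝ G y e) {y : E} (hy : y ∈ s) {t : ℝ} (ht : 0 ≤ t)
    (hyt : y + t • e ∈ s) : G y + c * t ≤ G (y + t • e) := by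
  set f : ℝ → ℝ := fun τ => G (y + τ • e)
  have hf : ∀ τ, HasDerivAt f (fderiv ℝ G (y + τ • e) e) τ := fun τ => by
    have := (hG (y + τ • e)).hasFDerivAt.comp_hasDerivAt τ
      (((hasDerivAt_id τ).smul_const e).const_add y)
    rwa [one_smul] at this
  have hmem : ∀ τ ∈ Icc 0 t, y + τ • e ∈ s := by
    intro τ hτ
    rcases ht.eq_or_lt with rfl | ht'
    · obtain rfl : τ = 0 := le_antisymm hτ.2 hτ.1
      simpa using hy
    have := hs.add_smul_mem hy (y := t • e) hyt
      ⟨div_nonneg hτ.1 ht, (div_le_one ht').mpr hτ.2⟩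
    rwa [smul_smul, div_mul_cancel₀ _ ht'.ne'] at this
  have := (convex_Icc 0 t).mul_sub_le_image_sub_of_le_deriv (f := f)
    (fun τ _ => (hf τ).continuousAt.continuousWithinAt)
    (fun τ _ => (hf τ).differentiableAt.differentiableWithinAt)
    (fun τ hτ => (hf τ).deriv ▸ hc _ (hmem τ (interior_subset hτ))) 0 ⟨le_rfl, ht⟩ t
    ⟨ht, le_rfl⟩ ht
  simp only [f, zero_smul, add_zero, sub_zero] at this
  linarith

lemma exists_nat_mul_mem_Icc {a h : ℝ} (ha : 0 ≤ a) (hh : 0 < h) :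
    ∃ n : ℕ, a ≤ n * h ∧ n * h ≤ a + h := by
  refine ⟨⌈a / h⌉₊, ?_, ?_⟩
  · have := Nat.le_ceil (a / h)
    rwa [div_le_iff₀ hh] at this
  · have := Nat.ceil_lt_add_one (div_nonneg ha hh.le)
    rw [← sub_lt_iff_lt_add, lt_div_iff₀ hh] at this
    linarith

namespace DiscretePotential

variable {d : ℕ} {h : ℝ} {A : Set (Pt d)}

lemma step_eq_add_single (h : ℝ) (x : Pt d) (ν : Fin d) : step h x ν = x + Pi.single ν h := by
  funext i
  simp [step, Pi.single_apply]

lemma IsLattice.add_single {x : Pt d} (hx : IsLattice h x) (ν : Fin d) (m : ℤ) :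
    IsLattice h (x + Pi.single ν (m * h)) := by
  intro i
  obtain ⟨k, hk⟩ := hx i
  by_cases hi : i = ν
  · subst hi
    exact ⟨k + m, by simp [hk]; ring⟩
  · exact ⟨k, by simp [hk, hi]⟩

lemma IsLattice.sup {x y : Pt d} (hx : IsLattice h x) (hy : IsLattice h y) :
    IsLattice h (x ⊔ y) :=
  fun i => (max_choice (x i) (y i)).elim (fun e => by simpa [e] using hx i) fun e => by
    simpa [e] using hy i

lemma IsLattice.inf {x y : Pt d} (hx : IsLattice h x) (hy : IsLattice h y) :
    IsLattice h (x ⊓ y) :=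
  fun i => (min_choice (x i) (y i)).elim (fun e => by simpa [e] using hx i) fun e => by
    simpa [e] using hy i

def GridAdj (h : ℝ) (A : Set (Pt d)) (x y : Pt d) : Prop :=
  x ∈ A ∧ y ∈ A ∧ IsLattice h x ∧ IsLattice h y ∧ ∃ ν, y = step h x ν ∨ x = step h y ν

instance : Std.Symm (GridAdj h A) where
  symm _ _ := fun ⟨hx, hy, lx, ly, ν, e⟩ => ⟨hy, hx, ly, lx, ν, e.symm⟩

lemma GridAdj.mono {B : Set (Pt d)} (hAB : A ⊆ B) {x y : Pt d} (hxy : GridAdj h A x y) :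
    GridAdj h B x y :=
  ⟨hAB hxy.1, hAB hxy.2.1, hxy.2.2⟩

lemma reflTransGen_gridAdj_mono {B : Set (Pt d)} (hAB : A ⊆ B) {x y : Pt d}
    (hxy : ReflTransGen (GridAdj h A) x y) : ReflTransGen (GridAdj h B) x y :=
  ReflTransGen.mono (fun _ _ => GridAdj.mono hAB) _ _ hxy

lemma reflTransGen_gridAdj_symm {x y : Pt d} (hxy : ReflTransGen (GridAdj h A) x y) :
    ReflTransGen (GridAdj h A) y x :=
  Std.Symm.symm _ _ hxy

lemma eq_of_reflTransGen_gridAdj (hh : h ≠ 0) {u : Pt d → ℝ}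
    (hu : ∀ x ν, IsLattice h x → x ∈ A → step h x ν ∈ A → (u (step h x ν) - u x) / h = 0)
    {x y : Pt d} (hxy : ReflTransGen (GridAdj h A) x y) : u x = u y := by
  induction hxy with
  | refl => rfl
  | tail _ hadj ih =>
    obtain ⟨ha, hb, la, lb, ν, e | e⟩ := hadj
    · subst e
      rw [ih, eq_comm, ← sub_eq_zero]
      exact (div_eq_zero_iff.mp (hu _ ν la ha hb)).resolve_right hh
    · subst e
      rw [ih, ← sub_eq_zero]
      exact (div_eq_zero_iff.mp (hu _ ν lb hb ha)).resolve_right hh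

lemma intCast_mul_mem_uIcc (hh : 0 ≤ h) {j m : ℤ} (hj : j ∈ uIcc 0 m) :
    (j : ℝ) * h ∈ uIcc 0 ((m : ℝ) * h) := by
  rcases mem_uIcc.mp hj with ⟨h0, hm⟩ | ⟨hm, h0⟩
  · have h0' : (0 : ℝ) ≤ j := by exact_mod_cast h0
    have hm' : (j : ℝ) ≤ m := by exact_mod_cast hm
    exact mem_uIcc.mpr (Or.inl ⟨by positivity, by gcongr⟩)
  · have h0' : (j : ℝ) ≤ 0 := by exact_mod_cast h0
    have hm' : (m : ℝ) ≤ j := by exact_mod_cast hm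
    exact mem_uIcc.mpr (Or.inr ⟨by gcongr, mul_nonpos_of_nonpos_of_nonneg h0' hh⟩)

lemma reflTransGen_gridAdj_add_single {x : Pt d} (hx : IsLattice h x) (ν : Fin d) (m : ℤ)
    (hA : ∀ j ∈ uIcc 0 m, x + Pi.single ν ((j : ℝ) * h) ∈ A) :
    ReflTransGen (GridAdj h A) x (x + Pi.single ν ((m : ℝ) * h)) := by
  set w : ℤ → Pt d := fun j => x + Pi.single ν ((j : ℝ) * h)
  have hadj : ∀ j ∈ Ico (min 0 m) (max 0 m), GridAdj h A (w j) (w (Order.succ j)) := by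
    intro j hj
    have hw : w (j + 1) = step h (w j) ν := by
      simp only [w, step_eq_add_single, add_assoc, ← Pi.single_add]
      push_cast
      ring_nf
    rw [Order.succ_eq_add_one]
    exact ⟨hA j (Ico_subset_Icc_self hj), hA (j + 1) ⟨by linarith [hj.1], hj.2⟩,
      hx.add_single ν j, hx.add_single ν (j + 1), ν, Or.inl hw⟩
  have hwalk : ReflTransGen (GridAdj h A) (w (min 0 m)) (w (max 0 m)) :=
    ReflTransGen.lift w (fun _ _ hij => hij) _ _
      (reflTransGen_of_succ_of_le (fun i j => GridAdj h A (w i) (w j)) hadj min_le_max)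
  have hw0 : w 0 = x := by simp [w]
  rcases le_total 0 m with hm | hm
  · simpa [hm, hw0] using hwalk
  · simpa [hm, hw0] using reflTransGen_gridAdj_symm hwalk

lemma reflTransGen_gridAdj_of_uIcc (hh : 0 ≤ h) {v v' : Pt d} (hv : IsLattice h v)
    (hv' : IsLattice h v') (hA : ∀ z ∈ uIcc v v', IsLattice h z → z ∈ A) :
    ReflTransGen (GridAdj h A) v v' := by
  classical
  suffices ∀ s : Finset (Fin d), ReflTransGen (GridAdj h A) v (s.piecewise v' v) by
    simpa using this Finset.univ
  intro s
  induction s using Finset.induction_on with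
  | empty => simpa using ReflTransGen.refl
  | insert i s hi ih =>
    set w := s.piecewise v' v
    have hw : IsLattice h w := fun k => by
      by_cases hk : k ∈ s <;> simp [w, hk, hv k, hv' k]
    have hwbox : ∀ k, w k ∈ uIcc (v k) (v' k) := fun k => by
      by_cases hk : k ∈ s <;> simp [w, hk]
    obtain ⟨m, hm⟩ : ∃ m : ℤ, v' i - v i = m * h := by
      obtain ⟨a, ha⟩ := hv i
      obtain ⟨b, hb⟩ := hv' i
      exact ⟨b - a, by rw [ha, hb]; push_cast; ring⟩
    have hwi : w i = v i := by simp [w, hi]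
    have hstep : (insert i s).piecewise v' v = w + Pi.single i ((m : ℝ) * h) := by
      rw [Finset.piecewise_insert]
      funext k
      by_cases hk : k = i
      · subst hk
        simp [hwi, ← hm]
      · simp [hk, w]
    rw [hstep]
    refine ih.trans (reflTransGen_gridAdj_add_single hw i m fun j hj =>
      hA _ ?_ (hw.add_single i j))
    rw [← pi_univ_uIcc]
    intro k _
    by_cases hk : k = i
    · subst hk
      have := intCast_mul_mem_uIcc hh hj
      rw [mem_uIcc] at this ⊢
      simp only [Pi.add_apply, Pi.single_eq_same, hwi]
      rcases this with h1 | h1 <;> [left; right] <;> constructor <;> linarith [h1.1, h1.2]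
    · simpa [hk] using hwbox k

noncomputable def latticeFloor (h : ℝ) (x : Pt d) : Pt d := fun i => ⌊x i / h⌋ * h

lemma isLattice_latticeFloor (h : ℝ) (x : Pt d) : IsLattice h (latticeFloor h x) :=
  fun _ => ⟨_, rfl⟩

lemma IsLattice.latticeFloor_eq (hh : h ≠ 0) {x : Pt d} (hx : IsLattice h x) :
    latticeFloor h x = x := by
  funext i
  obtain ⟨m, hm⟩ := hx i
  simp [latticeFloor, hm, hh]

lemma latticeFloor_mem_Ioc (hh : 0 < h) (x : Pt d) (i : Fin d) :
    latticeFloor h x i ∈ Ioc (x i - h) (x i) := by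
  have h1 := Int.floor_le (x i / h)
  have h2 := Int.lt_floor_add_one (x i / h)
  have e : x i / h * h = x i := div_mul_cancel₀ _ hh.ne'
  constructor <;> simp only [latticeFloor] <;> nlinarith

lemma reflTransGen_gridAdj_latticeFloor_of_dist_le (hh : 0 < h) {a b : Pt d}
    (hab : dist a b ≤ h) (hA : closedBall a (2 * h) ⊆ A) :
    ReflTransGen (GridAdj h A) (latticeFloor h a) (latticeFloor h b) := by
  refine reflTransGen_gridAdj_of_uIcc hh.le (isLattice_latticeFloor h a)
    (isLattice_latticeFloor h b) fun z hz _ => hA ?_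
  rw [← pi_univ_uIcc] at hz
  rw [mem_closedBall, dist_pi_le_iff (by positivity)]
  intro i
  have hzi := mem_uIcc.mp (hz i (mem_univ i))
  have ha := latticeFloor_mem_Ioc hh a i
  have hb := latticeFloor_mem_Ioc hh b i
  have hi := (Real.dist_eq _ _ ▸ dist_le_pi_dist a b i).trans hab
  rw [Real.dist_eq, abs_le]
  rw [abs_le] at hi
  rcases hzi with h1 | h1 <;> constructor <;> linarith [ha.1, ha.2, hb.1, hb.2, h1.1, h1.2]

lemma _root_.IsPreconnected.reflTransGen_gridAdj_latticeFloor {C : Set (Pt d)}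
    (hC : IsPreconnected C) (hh : 0 < h) (hCA : cthickening (2 * h) C ⊆ A) {x y : Pt d}
    (hx : x ∈ C) (hy : y ∈ C) :
    ReflTransGen (GridAdj h A) (latticeFloor h x) (latticeFloor h y) := by
  have hball : ∀ c ∈ C, closedBall c (2 * h) ⊆ A := fun c hc =>
    (closedBall_subset_cthickening hc _).trans hCA
  refine hC.induction₂'
    (fun x y => ReflTransGen (GridAdj h A) (latticeFloor h x) (latticeFloor h y))
    (fun a ha => ?_) (fun _ _ _ _ _ _ => ReflTransGen.trans) hx hy
  filter_upwards [mem_nhdsWithin_of_mem_nhds (closedBall_mem_nhds a hh), self_mem_nhdsWithin]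
    with b hab hb
  rw [mem_closedBall] at hab
  exact ⟨reflTransGen_gridAdj_latticeFloor_of_dist_le hh (dist_comm a b ▸ hab) (hball a ha),
    reflTransGen_gridAdj_latticeFloor_of_dist_le hh hab (hball b hb)⟩

lemma _root_.IsOpen.exists_reflTransGen_gridAdj {U K : Set (Pt d)} (hU : IsOpen U)
    (hUc : IsConnected U) (hK : IsCompact K) (hKU : K ⊆ U) :
    ∃ h₀ > 0, ∀ h, 0 < h → h < h₀ → ∀ x ∈ K, ∀ y ∈ K, IsLattice h x → IsLattice h y →
      ReflTransGen (GridAdj h U) x y := by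
  obtain ⟨C, hCc, hCp, hKC, hCU⟩ := hU.exists_isCompact_isPreconnected_between hUc hK hKU
  obtain ⟨δ, hδ, hδU⟩ := hCc.exists_cthickening_subset_open hU hCU
  refine ⟨δ / 2, by positivity, fun h hh hlt x hx y hy hxl hyl => ?_⟩
  have := hCp.reflTransGen_gridAdj_latticeFloor hh
    ((cthickening_mono (by linarith) C).trans hδU) (hKC hx) (hKC hy)
  rwa [hxl.latticeFloor_eq hh.ne', hyl.latticeFloor_eq hh.ne'] at this

lemma dist_add_single_le (x y : Pt d) (ν : Fin d) (s : ℝ) :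
    dist (x + Pi.single ν s) y ≤ dist x y + |s| := by
  have : dist (x + Pi.single ν s) x = |s| := by
    rw [dist_self_add_left, Pi.norm_single, Real.norm_eq_abs]
  linarith [dist_triangle (x + Pi.single ν s) x y]

/-- A local defining function of `Γ` with a uniform lower bound on `∂F/∂x_dir`, in integrated
form. -/
structure Chart (Γ : Set (Pt d)) where
  center : Pt d
  radius : ℝ
  dir : Fin d
  F : Pt d → ℝ
  rate : ℝ
  radius_pos : 0 < radius
  rate_pos : 0 < rate
  continuous : Continuous F
  mem_iff : ∀ y ∈ closedBall center radius, y ∈ Γ ↔ F y = 0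
  growth : ∀ y ∈ closedBall center radius, ∀ t, 0 ≤ t →
    y + Pi.single dir t ∈ closedBall center radius → F y + rate * t ≤ F (y + Pi.single dir t)

lemma IsC2Hypersurface.exists_chart {Γ : Set (Pt d)} (hΓ : IsC2Hypersurface Γ) {p : Pt d}
    (hp : p ∈ Γ) {r : ℝ} (hr : 0 < r) : ∃ D : Chart Γ, D.center = p ∧ D.radius ≤ r := by
  obtain ⟨U, F, hU, hpU, hF, hzero, hder⟩ := hΓ p hp
  obtain ⟨ν, hν⟩ : ∃ ν, fderiv ℝ F p (Pi.single ν 1) ≠ 0 := by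
    by_contra! h0
    refine hder p hpU (ContinuousLinearMap.coe_injective (LinearMap.pi_ext fun i x => ?_))
    have : (Pi.single i x : Pt d) = x • Pi.single i 1 := by simp [← Pi.single_smul']
    simp [this, h0 i]
  obtain ⟨G, hG, hGzero, hGpos⟩ : ∃ G : Pt d → ℝ, ContDiff ℝ 2 G ∧
      (∀ y ∈ U, y ∈ Γ ↔ G y = 0) ∧ 0 < fderiv ℝ G p (Pi.single ν 1) := by
    rcases hν.lt_or_gt with hneg | hpos
    · exact ⟨-F, hF.neg, fun y hy => by simpa using hzero y hy,
        by simpa [fderiv_neg] using hneg⟩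
    · exact ⟨F, hF, hzero, hpos⟩
  set c := fderiv ℝ G p (Pi.single ν 1) / 2 with hc
  have hnhds : U ∩ {y | c < fderiv ℝ G y (Pi.single ν 1)} ∈ 𝓝 p :=
    (hU.inter (isOpen_lt continuous_const
      ((hG.continuous_fderiv (by norm_num)).clm_apply continuous_const))).mem_nhds
      ⟨hpU, show c < _ by rw [hc]; linarith⟩
  obtain ⟨ε, hε, hball⟩ := Metric.mem_nhds_iff.mp hnhds
  have hsub : closedBall p (min (ε / 2) r) ⊆ U ∩ {y | c < fderiv ℝ G y (Pi.single ν 1)} :=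
    (closedBall_subset_ball (by linarith [min_le_left (ε / 2) r])).trans hball
  refine ⟨⟨p, min (ε / 2) r, ν, G, c, by positivity, by positivity, hG.continuous,
    fun y hy => hGzero y (hsub hy).1, fun y hy t ht hyt => ?_⟩, rfl, min_le_right _ _⟩
  have e : (Pi.single ν t : Pt d) = t • Pi.single ν 1 := by simp [← Pi.single_smul']
  rw [e] at hyt ⊢
  exact (convex_closedBall p _).add_mul_le_of_le_fderiv (hG.differentiable (by norm_num))
    (fun y hy => (hsub hy).2.le) hy ht hyt

namespace Chart

variable {Γ : Set (Pt d)} (D : Chart Γ)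

def deep : Set (Pt d) :=
  closedBall D.center (D.radius / 2) ∩ {y | D.rate * D.radius / 8 ≤ |D.F y|}

lemma isClosed_deep : IsClosed D.deep :=
  isClosed_closedBall.inter (isClosed_le continuous_const D.continuous.abs)

lemma disjoint_deep : Disjoint D.deep Γ := by
  have := D.rate_pos
  have := D.radius_pos
  rw [disjoint_left]
  rintro y ⟨hy, hF⟩ hyΓ
  have hyD : y ∈ closedBall D.center D.radius := closedBall_subset_closedBall (by linarith) hy
  rw [mem_ofPred_eq, (D.mem_iff y hyD).mp hyΓ, abs_zero] at hF
  nlinarith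

lemma abs_F_add_mul_le {x : Pt d} {s : ℝ} (hs : dist x D.center + |s| ≤ D.radius)
    (hsF : 0 ≤ s * D.F x) : |D.F x| + D.rate * |s| ≤ |D.F (x + Pi.single D.dir s)| := by
  have hx : x ∈ closedBall D.center D.radius := mem_closedBall.mpr (by linarith [abs_nonneg s])
  have hxs : x + Pi.single D.dir s ∈ closedBall D.center D.radius :=
    mem_closedBall.mpr (by linarith [dist_add_single_le x D.center D.dir s])
  rcases lt_trichotomy s 0 with hs0 | rfl | hs0
  · have hback : x + Pi.single D.dir s + Pi.single D.dir (-s) = x := by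
      simp only [add_assoc, ← Pi.single_add, add_neg_cancel, Pi.single_zero, add_zero]
    have := D.growth _ hxs (-s) (by linarith) (by rwa [hback])
    rw [hback] at this
    rw [abs_of_nonpos (by nlinarith), abs_of_neg hs0]
    linarith [neg_abs_le (D.F (x + Pi.single D.dir s))]
  · simp
  · have := D.growth x hx s hs0.le hxs
    rw [abs_of_nonneg (by nlinarith), abs_of_pos hs0]
    linarith [le_abs_self (D.F (x + Pi.single D.dir s))]

/-- Along the segment `|F|` grows, so the segment never meets `Γ` and cannot leave `U`. -/
lemma add_single_mem_of_mul_nonneg {U : Set (Pt d)} (hU : IsOpen U) (hUΓ : Disjoint U Γ)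
    (hfr : frontier U ⊆ Γ) {x : Pt d} (hxU : x ∈ U) {T : ℝ}
    (hT : dist x D.center + |T| ≤ D.radius) (hTF : 0 ≤ T * D.F x) :
    ∀ s ∈ uIcc 0 T, x + Pi.single D.dir s ∈ U := by
  have hFx : D.F x ≠ 0 := fun h0 => disjoint_left.mp hUΓ hxU
    ((D.mem_iff x (mem_closedBall.mpr (by linarith [abs_nonneg T]))).mpr h0)
  have hsT : ∀ s ∈ uIcc 0 T, |s| ≤ |T| := fun s hs => by
    simpa using abs_sub_left_of_mem_uIcc hs
  have hgrow : ∀ s ∈ uIcc 0 T, |D.F x| ≤ |D.F (x + Pi.single D.dir s)| := fun s hs => by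
    refine le_trans ?_ (D.abs_F_add_mul_le (by linarith [hsT s hs]) ?_)
    · nlinarith [D.rate_pos, abs_nonneg s]
    · rcases mem_uIcc.mp hs with ⟨h1, h2⟩ | ⟨h1, h2⟩ <;>
        rcases le_total 0 (D.F x) with hF | hF <;> nlinarith
  intro s hs
  refine (isPreconnected_uIcc.image _
    (continuous_const.add (continuous_single (A := fun _ => ℝ) D.dir)).continuousOn
    ).subset_of_closure_inter_subset hU ⟨x, ⟨0, left_mem_uIcc, by simp⟩, hxU⟩ ?_ ⟨s, hs, rfl⟩
  rintro _ ⟨hcl, s, hs, rfl⟩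
  by_contra hnot
  have hball : x + Pi.single D.dir s ∈ closedBall D.center D.radius :=
    mem_closedBall.mpr (by linarith [dist_add_single_le x D.center D.dir s, hsT s hs])
  have := hgrow s hs
  rw [(D.mem_iff _ hball).mp (hfr ⟨hcl, by rwa [hU.interior_eq]⟩), abs_zero] at this
  exact hFx (abs_nonpos_iff.mp this)

lemma exists_reflTransGen_gridAdj {U : Set (Pt d)} (hU : IsOpen U) (hUΓ : Disjoint U Γ)
    (hfr : frontier U ⊆ Γ) (hh : 0 < h) (hhD : 8 * h ≤ D.radius) {x : Pt d}
    (hx : IsLattice h x) (hxU : x ∈ U) (hxD : dist x D.center < D.radius / 4) :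
    ∃ z, IsLattice h z ∧ z ∈ U ∩ D.deep ∧
      ReflTransGen (GridAdj h (U ∩ closedBall D.center (D.radius / 2))) x z := by
  obtain ⟨n, hn1, hn2⟩ :=
    exists_nat_mul_mem_Icc (by linarith [D.radius_pos] : 0 ≤ D.radius / 8) hh
  set m : ℤ := if 0 < D.F x then n else -n
  have hm : |(m : ℝ) * h| = n * h := by
    by_cases hF : 0 < D.F x <;> simp [m, hF, abs_mul, abs_of_pos hh]
  have hmF : 0 ≤ (m : ℝ) * h * D.F x := by
    by_cases hF : 0 < D.F x
    · simp only [m, if_pos hF, Int.cast_natCast]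
      positivity
    · simp only [m, if_neg hF, Int.cast_neg, Int.cast_natCast, neg_mul]
      nlinarith [not_lt.mp hF]
  have hseg := D.add_single_mem_of_mul_nonneg hU hUΓ hfr hxU (by linarith) hmF
  have hhalf : ∀ s, |s| ≤ n * h → x + Pi.single D.dir s ∈ closedBall D.center (D.radius / 2) :=
    fun s hs => mem_closedBall.mpr (by linarith [dist_add_single_le x D.center D.dir s])
  refine ⟨_, hx.add_single D.dir m, ⟨hseg _ right_mem_uIcc, hhalf _ hm.le, ?_⟩,
    reflTransGen_gridAdj_add_single hx D.dir m fun j hj =>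
      ⟨hseg _ (intCast_mul_mem_uIcc hh.le hj), hhalf _ ?_⟩⟩
  · have := D.abs_F_add_mul_le (x := x) (s := m * h) (by linarith) hmF
    rw [hm] at this
    rw [mem_ofPred_eq]
    nlinarith [abs_nonneg (D.F x), D.rate_pos]
  · simpa [hm] using abs_sub_left_of_mem_uIcc (intCast_mul_mem_uIcc hh.le hj)

end Chart

/-- `K` is the complement of a thin neighbourhood of `Γ` together with the deep parts of
finitely many charts covering `Γ`. -/
lemma IsC2Hypersurface.exists_reflTransGen_gridAdj_mem {Γ : Set (Pt d)}
    (hΓ : IsC2Hypersurface Γ) (hΓc : IsCompact Γ) {r : ℝ} (hr : 0 < r) :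
    ∃ K, IsClosed K ∧ Disjoint K Γ ∧ ∃ h₀ > 0, ∀ h, 0 < h → h < h₀ →
      ∀ U, IsOpen U → Disjoint U Γ → frontier U ⊆ Γ → ∀ x, IsLattice h x → x ∈ U →
        ∃ z, IsLattice h z ∧ z ∈ U ∩ K ∧ (z = x ∨ z ∈ cthickening r Γ) ∧
          ReflTransGen (GridAdj h (U ∩ cthickening r Γ)) x z := by
  choose D hD using fun p : Γ => hΓ.exists_chart p.2 hr
  obtain ⟨t, ht⟩ := hΓc.elim_finite_subcover (fun p : Γ => ball (p : Pt d) ((D p).radius / 8))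
    (fun _ => isOpen_ball) fun p hp =>
      mem_iUnion.mpr ⟨⟨p, hp⟩, mem_ball_self (by linarith [(D ⟨p, hp⟩).radius_pos])⟩
  obtain ⟨δ, hδ, hδt⟩ : ∃ δ > 0, ∀ p ∈ t, 8 * δ ≤ (D p).radius := by
    rcases t.eq_empty_or_nonempty with rfl | hne
    · exact ⟨1, one_pos, by simp⟩
    refine ⟨t.inf' hne (fun p => (D p).radius) / 8,
      by linarith [(Finset.lt_inf'_iff hne).mpr fun p _ => (D p).radius_pos], fun p hp => ?_⟩
    linarith [t.inf'_le (fun p => (D p).radius) hp]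
  refine ⟨(thickening δ Γ)ᶜ ∪ ⋃ p ∈ t, (D p).deep,
    isOpen_thickening.isClosed_compl.union (isClosed_biUnion_finset fun p _ => (D p).isClosed_deep),
    disjoint_union_left.mpr ⟨disjoint_compl_left.mono_right (self_subset_thickening hδ Γ),
      disjoint_iUnion₂_left.mpr fun p _ => (D p).disjoint_deep⟩,
    δ, hδ, fun h hh hlt U hU hUΓ hfr x hx hxU => ?_⟩
  by_cases hxΓ : x ∈ thickening δ Γ
  · obtain ⟨q, hq, hxq⟩ := mem_thickening_iff.mp hxΓ
    obtain ⟨p, hpt, hqp⟩ := mem_iUnion₂.mp (ht hq)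
    have hρ := hδt p hpt
    have hxp : dist x (D p).center < (D p).radius / 4 := by
      rw [(hD p).1]
      linarith [dist_triangle x q p, mem_ball.mp hqp]
    obtain ⟨z, hz, hzU, hpath⟩ :=
      (D p).exists_reflTransGen_gridAdj hU hUΓ hfr hh (by linarith) hx hxU hxp
    have hsub : closedBall (D p).center ((D p).radius / 2) ⊆ cthickening r Γ := by
      rw [(hD p).1]
      exact (closedBall_subset_closedBall (by linarith [(hD p).2, (D p).radius_pos])).trans
        (closedBall_subset_cthickening p.2 r)
    exact ⟨z, hz, ⟨hzU.1, Or.inr (mem_iUnion₂.mpr ⟨p, hpt, hzU.2⟩)⟩, Or.inr (hsub hzU.2.1),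
      reflTransGen_gridAdj_mono (inter_subset_inter_right _ hsub) hpath⟩
  · exact ⟨x, hx, ⟨hxU, Or.inl hxΓ⟩, Or.inl rfl, ReflTransGen.refl⟩

namespace Setup

variable (S : Setup d)

lemma isCompact_closure_Ωp : IsCompact (closure S.Ωp) := S.bounded_Ωp.isCompact_closure

lemma isCompact_frontier_Ωp : IsCompact (frontier S.Ωp) :=
  S.isCompact_closure_Ωp.of_isClosed_subset isClosed_frontier frontier_subset_closure

lemma Ωp_subset_B : S.Ωp ⊆ S.B :=
  subset_closure.trans (S.closure_subset.trans interior_subset)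

lemma isOpen_Ωm : IsOpen S.Ωm := isOpen_interior.sdiff isClosed_closure

lemma Ωm_subset : S.Ωm ⊆ S.B \ S.Ωp :=
  fun _ hx => ⟨interior_subset hx.1, fun h => hx.2 (subset_closure h)⟩

theorem exists_reflTransGen_gridAdj_Ωp : ∃ h₀ > 0, ∀ h, 0 < h → h < h₀ →
    ∀ x ∈ S.Ωhp h, ∀ y ∈ S.Ωhp h, ReflTransGen (GridAdj h S.Ωp) x y := by
  obtain ⟨K, hKc, hKΓ, h₁, hh₁, hesc⟩ :=
    S.c2_boundary.exists_reflTransGen_gridAdj_mem S.isCompact_frontier_Ωp one_pos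
  have hKΩ : closure S.Ωp ∩ K ⊆ S.Ωp := fun y hy => by
    rw [← S.isOpen_Ωp.interior_eq, ← closure_sdiff_frontier]
    exact ⟨hy.1, disjoint_left.mp hKΓ hy.2⟩
  obtain ⟨h₂, hh₂, hconn⟩ := S.isOpen_Ωp.exists_reflTransGen_gridAdj S.connected_Ωp
    (S.isCompact_closure_Ωp.inter_right hKc) hKΩ
  refine ⟨min h₁ h₂, lt_min hh₁ hh₂, fun h hh hlt x hx y hy => ?_⟩
  have hdeep : ∀ w ∈ S.Ωhp h, ∃ z ∈ closure S.Ωp ∩ K, IsLattice h z ∧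
      ReflTransGen (GridAdj h S.Ωp) w z := fun w hw => by
    obtain ⟨z, hz, hzK, -, hwz⟩ := hesc h hh (hlt.trans_le (min_le_left _ _)) S.Ωp
      S.isOpen_Ωp (disjoint_frontier_iff_isOpen.mpr S.isOpen_Ωp).symm subset_rfl w hw.1 hw.2
    exact ⟨z, ⟨subset_closure hzK.1, hzK.2⟩, hz,
      reflTransGen_gridAdj_mono inter_subset_left hwz⟩
  obtain ⟨zx, hzx, hzxl, hxzx⟩ := hdeep x hx
  obtain ⟨zy, hzy, hzyl, hyzy⟩ := hdeep y hy
  exact hxzx.trans ((hconn h hh (hlt.trans_le (min_le_right _ _)) zx hzx zy hzy hzxl hzyl).trans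
    (reflTransGen_gridAdj_symm hyzy))

lemma mem_B {x : Pt d} : x ∈ S.B ↔ ∀ i, S.a i ≤ x i ∧ x i ≤ S.a i + S.L := by
  simp [B, cube, Pi.le_def, forall_and]

def innerB (r : ℝ) : Set (Pt d) := Icc (fun i => S.a i + r) (fun i => S.a i + S.L - r)

lemma isCompact_innerB (r : ℝ) : IsCompact (S.innerB r) := isCompact_Icc

lemma mem_innerB {r : ℝ} {x : Pt d} :
    x ∈ S.innerB r ↔ ∀ i, S.a i + r ≤ x i ∧ x i ≤ S.a i + S.L - r := by
  simp [innerB, Pi.le_def, forall_and]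

lemma innerB_anti {r s : ℝ} (hrs : r ≤ s) : S.innerB s ⊆ S.innerB r := fun x hx => by
  rw [mem_innerB] at hx ⊢
  exact fun i => ⟨by linarith [hx i], by linarith [hx i]⟩

lemma innerB_subset_interior {r : ℝ} (hr : 0 < r) : S.innerB r ⊆ interior S.B := by
  intro x hx
  rw [mem_innerB] at hx
  refine interior_maximal (t := univ.pi fun i => Ioo (S.a i) (S.a i + S.L)) (fun z hz => ?_)
    (isOpen_set_pi finite_univ fun _ _ => isOpen_Ioo) fun i _ => ?_
  · exact S.mem_B.mpr fun i => ⟨(hz i trivial).1.le, (hz i trivial).2.le⟩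
  · exact ⟨by linarith [hx i], by linarith [hx i]⟩

lemma exists_closure_subset_innerB : ∃ r > 0, closure S.Ωp ⊆ S.innerB (3 * r) := by
  obtain ⟨δ, hδ, hδB⟩ :=
    S.isCompact_closure_Ωp.exists_cthickening_subset_open isOpen_interior S.closure_subset
  refine ⟨δ / 3, by positivity, fun y hy => S.mem_innerB.mpr fun i => ?_⟩
  have hshift : ∀ s : ℝ, |s| ≤ δ → S.a i ≤ y i + s ∧ y i + s ≤ S.a i + S.L := fun s hs => by
    have hys : (fun j => y j + s) ∈ closedBall y δ :=
      mem_closedBall.mpr ((dist_pi_le_iff hδ.le).mpr fun j => by simpa [Real.dist_eq] using hs)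
    exact S.mem_B.mp (interior_subset (hδB (closedBall_subset_cthickening hy δ hys))) i
  have h1 := hshift (-δ) (by simp [abs_of_pos hδ])
  have h2 := hshift δ (by simp [abs_of_pos hδ])
  constructor <;> linarith [h1.1, h2.2]

lemma cthickening_frontier_subset_innerB {r s : ℝ} (hr : 0 ≤ r)
    (hs : closure S.Ωp ⊆ S.innerB s) : cthickening r (frontier S.Ωp) ⊆ S.innerB (s - r) := by
  rw [S.isCompact_frontier_Ωp.cthickening_eq_biUnion_closedBall hr]
  intro y hy
  obtain ⟨q, hq, hyq⟩ := mem_iUnion₂.mp hy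
  have hq' := S.mem_innerB.mp (hs (frontier_subset_closure hq))
  refine S.mem_innerB.mpr fun i => ?_
  have := (Real.dist_eq _ _ ▸ dist_le_pi_dist y q i).trans (mem_closedBall.mp hyq)
  rw [abs_le] at this
  constructor <;> linarith [hq' i]

/-- `x'` is the projection of `x` onto the lattice cube of margin `k h ∈ [r, r + h]`. -/
lemma exists_isLattice_innerB_uIcc {r : ℝ} (hadm : S.Admissible h) (hhr : h ≤ r)
    (hL : 4 * r ≤ S.L) {x : Pt d} (hxl : IsLattice h x) (hxB : x ∈ S.B) {i : Fin d}
    (hxi : x i < S.a i + r ∨ S.a i + S.L - r < x i) :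
    ∃ x', IsLattice h x' ∧ x' ∈ S.innerB r ∧
      ∀ z ∈ uIcc x x', z ∈ S.B ∧ (z i ≤ S.a i + 2 * r ∨ S.a i + S.L - 2 * r ≤ z i) := by
  obtain ⟨hh, ha, n, hn⟩ := hadm
  obtain ⟨k, hk1, hk2⟩ := exists_nat_mul_mem_Icc (hh.le.trans hhr) hh
  set lo : Pt d := fun j => S.a j + k * h
  set hi : Pt d := fun j => S.a j + S.L - k * h
  have hlo : IsLattice h lo := fun j => by
    obtain ⟨m, hm⟩ := ha j
    exact ⟨m + k, by simp [lo, hm]; ring⟩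
  have hhi : IsLattice h hi := fun j => by
    obtain ⟨m, hm⟩ := ha j
    exact ⟨m + n - k, by simp [hi, hm, hn]; ring⟩
  set x' := lo ⊔ (x ⊓ hi)
  have hx'r : x' ∈ S.innerB r := S.mem_innerB.mpr fun j =>
    ⟨le_sup_of_le_left (by simp [lo]; linarith),
      sup_le (by simp [lo]; linarith) (inf_le_of_right_le (by simp [hi]; linarith))⟩
  refine ⟨x', hlo.sup (hxl.inf hhi), hx'r, fun z hz => ⟨uIcc_subset_Icc hxB
    (interior_subset (S.innerB_subset_interior (hh.trans_le hhr) hx'r)) hz, ?_⟩⟩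
  have h1 : min (x i) (x' i) ≤ z i := hz.1 i
  have h2 : z i ≤ max (x i) (x' i) := hz.2 i
  have hx'i : x' i = max (S.a i + k * h) (min (x i) (S.a i + S.L - k * h)) := rfl
  rcases hxi with hlt | hgt
  · have : x' i = S.a i + k * h :=
      hx'i.trans (max_eq_left ((min_le_left _ _).trans (by linarith)))
    exact Or.inl ((h2.trans (max_le (by linarith) this.le)).trans (by linarith))
  · have : x' i = S.a i + S.L - k * h := by
      rw [hx'i, min_eq_right (by linarith), max_eq_right (by linarith)]
    exact Or.inr (le_trans (by linarith) ((le_min (by linarith) this.ge).trans h1))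

lemma exists_reflTransGen_gridAdj_innerB {r : ℝ} (hadm : S.Admissible h) (hhr : h ≤ r)
    (hr : closure S.Ωp ⊆ S.innerB (3 * r)) {x : Pt d} (hx : x ∈ S.Ωhm h) :
    ∃ x', IsLattice h x' ∧ x' ∈ S.innerB r \ closure S.Ωp ∧
      ReflTransGen (GridAdj h (S.B \ S.Ωp)) x x' := by
  obtain ⟨hxl, hxB, hxcl⟩ := hx
  by_cases hxr : x ∈ S.innerB r
  · exact ⟨x, hxl, ⟨hxr, hxcl⟩, .refl⟩
  obtain ⟨i, hi⟩ : ∃ i, x i < S.a i + r ∨ S.a i + S.L - r < x i := by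
    simpa [mem_innerB, imp_iff_not_or, or_comm] using hxr
  have hL : 4 * r ≤ S.L := by
    obtain ⟨y, hy⟩ := S.connected_Ωp.nonempty
    have := S.mem_innerB.mp (hr (subset_closure hy)) i
    linarith [this.1, this.2, hadm.1]
  obtain ⟨x', hx'l, hx'r, hbox⟩ :=
    S.exists_isLattice_innerB_uIcc hadm hhr hL hxl (interior_subset hxB) hi
  have hnotcl : ∀ z ∈ uIcc x x', z ∉ closure S.Ωp := fun z hz hzcl => by
    have := S.mem_innerB.mp (hr hzcl) i
    rcases (hbox z hz).2 with h | h <;> linarith [this.1, this.2, hadm.1]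
  exact ⟨x', hx'l, ⟨hx'r, hnotcl x' right_mem_uIcc⟩, reflTransGen_gridAdj_of_uIcc hadm.1.le hxl
    hx'l fun z hz _ => ⟨(hbox z hz).1, fun hzΩ => hnotcl z hz (subset_closure hzΩ)⟩⟩

theorem exists_reflTransGen_gridAdj_Ωm : ∃ h₀ > 0, ∀ h, S.Admissible h → h < h₀ →
    ∀ x ∈ S.Ωhm h, ∀ y ∈ S.Ωhm h, ReflTransGen (GridAdj h (S.B \ S.Ωp)) x y := by
  obtain ⟨r, hr, hcl⟩ := S.exists_closure_subset_innerB
  obtain ⟨K, hKc, hKΓ, h₁, hh₁, hesc⟩ :=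
    S.c2_boundary.exists_reflTransGen_gridAdj_mem S.isCompact_frontier_Ωp hr
  have hΓr : cthickening r (frontier S.Ωp) ⊆ S.innerB r :=
    (S.cthickening_frontier_subset_innerB hr.le hcl).trans (S.innerB_anti (by linarith))
  have hKΩ : (S.innerB r ∩ K) \ S.Ωp ⊆ S.Ωm := fun z hz =>
    ⟨S.innerB_subset_interior hr hz.1.1, fun hzcl =>
      disjoint_left.mp hKΓ hz.1.2 ⟨hzcl, by rw [S.isOpen_Ωp.interior_eq]; exact hz.2⟩⟩
  obtain ⟨h₂, hh₂, hconn⟩ := S.isOpen_Ωm.exists_reflTransGen_gridAdj S.connected_Ωm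
    ((S.isCompact_innerB r).inter_right hKc |>.diff S.isOpen_Ωp) hKΩ
  refine ⟨min (min h₁ r) h₂, lt_min (lt_min hh₁ hr) hh₂, fun h hadm hlt x hx y hy => ?_⟩
  have hlt' := hlt.trans_le (min_le_left _ _)
  have hdeep : ∀ w ∈ S.Ωhm h, ∃ z ∈ (S.innerB r ∩ K) \ S.Ωp, IsLattice h z ∧
      ReflTransGen (GridAdj h (S.B \ S.Ωp)) w z := fun w hw => by
    obtain ⟨w', hw'l, ⟨hw'r, hw'cl⟩, hww'⟩ := S.exists_reflTransGen_gridAdj_innerB hadm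
      (hlt'.trans_le (min_le_right _ _)).le hcl hw
    obtain ⟨z, hz, ⟨hzU, hzK⟩, hzr, hw'z⟩ := hesc h hadm.1 (hlt'.trans_le (min_le_left _ _))
      _ isClosed_closure.isOpen_compl (disjoint_compl_left.mono_right frontier_subset_closure)
      (by rw [frontier_compl]; exact frontier_closure_subset) w' hw'l hw'cl
    refine ⟨z, ⟨⟨hzr.elim (· ▸ hw'r) (hΓr ·), hzK⟩, fun h => hzU (subset_closure h)⟩, hz,
      hww'.trans (reflTransGen_gridAdj_mono (fun v hv => ?_) hw'z)⟩
    exact ⟨interior_subset (S.innerB_subset_interior hr (hΓr hv.2)),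
      fun h => hv.1 (subset_closure h)⟩
  obtain ⟨zx, hzx, hzxl, hxzx⟩ := hdeep x hx
  obtain ⟨zy, hzy, hzyl, hyzy⟩ := hdeep y hy
  exact hxzx.trans ((reflTransGen_gridAdj_mono S.Ωm_subset (hconn h hadm.1
    (hlt.trans_le (min_le_right _ _)) zx hzx zy hzy hzxl hzyl)).trans
    (reflTransGen_gridAdj_symm hyzy))

end Setup

end DiscretePotential
open DiscretePotential DiscretePotential.Setup in
/-- Corollary 2.2: vanishing divided differences force constancy. -/
theorem constant_of_vanishing_differences (d : ℕ) (S : Setup d) :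
    ∃ h₀ > (0 : ℝ), ∀ h : ℝ, S.Admissible h → h < h₀ →
      (∀ u : Pt d → ℝ, (∀ I ∈ S.Ip h, (u (step h I.1 I.2) - u I.1) / h = 0) →
        ∀ x ∈ S.Ωhp h, ∀ y ∈ S.Ωhp h, u x = u y) ∧
      (∀ u : Pt d → ℝ, (∀ I ∈ S.Im h, (u (step h I.1 I.2) - u I.1) / h = 0) →
        ∀ x ∈ S.Ωhm h, ∀ y ∈ S.Ωhm h, u x = u y) := by
  obtain ⟨h₁, hh₁, hp⟩ := S.exists_reflTransGen_gridAdj_Ωp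
  obtain ⟨h₂, hh₂, hm⟩ := S.exists_reflTransGen_gridAdj_Ωm
  refine ⟨min h₁ h₂, lt_min hh₁ hh₂, fun h hadm hlt => ⟨fun u hu x hx y hy => ?_,
    fun u hu x hx y hy => ?_⟩⟩
  · refine eq_of_reflTransGen_gridAdj hadm.1.ne' (fun z ν hz hzA hsA => ?_)
      (hp h hadm.1 (hlt.trans_le (min_le_left _ _)) x hx y hy)
    exact hu (z, ν) ⟨⟨hz, S.Ωp_subset_B hzA, S.Ωp_subset_B hsA⟩, hzA, hsA⟩
  · refine eq_of_reflTransGen_gridAdj hadm.1.ne' (fun z ν hz hzA hsA => ?_)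
      (hm h hadm (hlt.trans_le (min_le_right _ _)) x hx y hy)
    exact hu (z, ν) ⟨⟨hz, hzA.1, hsA.1⟩, hzA.2, hsA.2⟩
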